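/- arXiv:2605.12819 — 4 statements merged into one kernel-verified Lean document; each statement's English description precedes it below -/
import Mathlib

section
/- Suppose f : R^n → R is C^2 with L-Lipschitz Hessian. Then for any x^0 ∈ R^n and u, v ∈ R^n with ||u||, ||v|| ≤ Δ, |2f(x^0 + (u+v)/2) + 2f(x^0 − (u+v)/2) − (1/2)(f(x^0+u) + f(x^0+v) + f(x^0−u) + f(x^0−v)) − 2f(x^0) − uᵀ∇²f(x^0)v| ≤ (2L/3)Δ³. -/
open Matrix
open scoped RealInnerProductSpace

noncomputable section

abbrev Eu (n : ℕ) := EuclideanSpace ℝ (Fin n)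

def IsMP {a b : ℕ} (A : Matrix (Fin a) (Fin b) ℝ) (A' : Matrix (Fin b) (Fin a) ℝ) : Prop :=
  A * A' * A = A ∧ A' * A * A' = A' ∧ (A * A')ᵀ = A * A' ∧ (A' * A)ᵀ = A' * A

def euclNorm {k : ℕ} (v : Fin k → ℝ) : ℝ := Real.sqrt (∑ i, v i ^ 2)

def spNorm {a b : ℕ} (A : Matrix (Fin a) (Fin b) ℝ) : ℝ :=
  ⨆ v : {v : Fin b → ℝ // euclNorm v ≤ 1}, euclNorm (A.mulVec v.1)

def frobNorm {a b : ℕ} (A : Matrix (Fin a) (Fin b) ℝ) : ℝ :=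
  Real.sqrt (∑ i, ∑ j, A i j ^ 2)

def mat1Norm {a b : ℕ} (A : Matrix (Fin a) (Fin b) ℝ) : ℝ := ⨆ j, ∑ i, |A i j|

/-!
Put `p = (u + v) / 2` and `q = (u - v) / 2`, so that `u = p + q` and `v = p - q`. With the second
difference `D(c, d) = f(c + d) + f(c - d) - 2 f(c) - dᵀ∇²f(c) d`, and using the symmetry of the
Hessian to write `uᵀ∇²f(x⁰)v = pᵀ∇²f(x⁰)p - qᵀ∇²f(x⁰)q`, the quantity to bound is
`D(x⁰, p) - ½ D(x⁰ + p, q) - ½ D(x⁰ - p, q) + ½ qᵀ(2∇²f(x⁰) - ∇²f(x⁰ + p) - ∇²f(x⁰ - p))q`.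
Integrating the Lipschitz bound on the Hessian twice along a segment gives
`|D(c, d)| ≤ L‖d‖³ / 3`, and the last term is at most `L‖p‖‖q‖²`. Finally
`‖p‖² + ‖q‖² ≤ Δ²` by the parallelogram law, under which `‖p‖³ + ‖q‖³ + 3‖p‖‖q‖² ≤ 2Δ³`.
-/

theorem abs_le_of_abs_deriv_le_mul_pow {φ φ' : ℝ → ℝ} (hφ : ∀ t, HasDerivAt φ (φ' t) t)
    (h0 : φ 0 = 0) {m : ℕ} {C : ℝ} (hφ' : ∀ s, 0 ≤ s → |φ' s| ≤ C * s ^ m) {t : ℝ} (ht : 0 ≤ t) :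
    |φ t| ≤ C / (m + 1) * t ^ (m + 1) := by
  have hB (s : ℝ) : HasDerivAt (fun s => C / (m + 1) * s ^ (m + 1)) (C * s ^ m) s := by
    refine ((hasDerivAt_pow (m + 1) s).const_mul (C / (m + 1))).congr_deriv ?_
    push_cast
    field_simp
  simpa [Real.norm_eq_abs] using image_norm_le_of_norm_deriv_right_le_deriv_boundary
    (fun s _ => (hφ s).continuousAt.continuousWithinAt) (fun s _ => (hφ s).hasDerivWithinAt)
    (by simp [h0]) hB (fun s hs => by simpa [Real.norm_eq_abs] using hφ' s hs.1) ⟨ht, le_rfl⟩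

section Taylor

variable {E G : Type*} [NormedAddCommGroup E] [NormedSpace ℝ E] [NormedAddCommGroup G]
  [NormedSpace ℝ G] {f : E → ℝ} {f' : E → E →L[ℝ] ℝ} {f'' : E → E →L[ℝ] E →L[ℝ] ℝ} {L : ℝ}

theorem HasFDerivAt.hasDerivAt_comp_add_smul {F : E → G} {F' : E →L[ℝ] G} {c d : E} {t : ℝ}
    (hF : HasFDerivAt F F' (c + t • d)) : HasDerivAt (fun s : ℝ => F (c + s • d)) (F' d) t := by
  have hline : HasDerivAt (fun s : ℝ => c + s • d) d t := by
    simpa using ((hasDerivAt_id t).smul_const d).const_add c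
  exact hF.comp_hasDerivAt t hline

theorem abs_sub_apply_apply_le (hlip : ∀ x y, ‖f'' x - f'' y‖ ≤ L * ‖x - y‖) (x y a b : E) :
    |f'' x a b - f'' y a b| ≤ L * ‖x - y‖ * ‖a‖ * ‖b‖ :=
  calc |f'' x a b - f'' y a b| = ‖(f'' x - f'' y) a b‖ := by simp [Real.norm_eq_abs]
    _ ≤ ‖f'' x - f'' y‖ * ‖a‖ * ‖b‖ := (f'' x - f'' y).le_opNorm₂ a b
    _ ≤ L * ‖x - y‖ * ‖a‖ * ‖b‖ := by gcongr; exact hlip x y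

variable (hf : ∀ x, HasFDerivAt f (f' x) x) (hf' : ∀ x, HasFDerivAt f' (f'' x) x)
  (hlip : ∀ x y, ‖f'' x - f'' y‖ ≤ L * ‖x - y‖)
include hf hf' hlip

theorem abs_taylor_two_le (c d : E) :
    |f (c + d) - f c - f' c d - f'' c d d / 2| ≤ L / 6 * ‖d‖ ^ 3 := by
  set ψ : ℝ → ℝ := fun t => f (c + t • d) - f c - t * f' c d - t ^ 2 / 2 * f'' c d d
  set ψ' : ℝ → ℝ := fun t => f' (c + t • d) d - f' c d - t * f'' c d d
  have hψ (t : ℝ) : HasDerivAt ψ (ψ' t) t := by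
    refine ((((hf _).hasDerivAt_comp_add_smul).sub_const (f c)).sub
      ((hasDerivAt_id t).mul_const (f' c d))).sub
      (((hasDerivAt_pow 2 t).div_const 2).mul_const (f'' c d d)) |>.congr_deriv ?_
    norm_num [ψ']
  have hψ' (t : ℝ) : HasDerivAt ψ' (f'' (c + t • d) d d - f'' c d d) t := by
    refine ((((hf' _).hasDerivAt_comp_add_smul).clm_apply (hasDerivAt_const t d)).sub_const
      (f' c d)).sub ((hasDerivAt_id t).mul_const (f'' c d d)) |>.congr_deriv ?_
    simp
  have hψ''_le (s : ℝ) (hs : 0 ≤ s) : |f'' (c + s • d) d d - f'' c d d| ≤ L * ‖d‖ ^ 3 * s ^ 1 := by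
    convert abs_sub_apply_apply_le hlip _ _ d d using 1
    simp [norm_smul, abs_of_nonneg hs]
    ring
  have hψ'_le (s : ℝ) (hs : 0 ≤ s) : |ψ' s| ≤ L * ‖d‖ ^ 3 / 2 * s ^ 2 := by
    convert abs_le_of_abs_deriv_le_mul_pow hψ' (by simp [ψ']) hψ''_le hs using 2
    norm_num
  convert abs_le_of_abs_deriv_le_mul_pow hψ (by simp [ψ]) hψ'_le zero_le_one using 1
  · norm_num [ψ, div_eq_inv_mul]
  · ring

theorem abs_add_sub_two_mul_sub_le (c d : E) :
    |f (c + d) + f (c - d) - 2 * f c - f'' c d d| ≤ L / 3 * ‖d‖ ^ 3 := by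
  have hplus := abs_taylor_two_le hf hf' hlip c d
  have hminus := abs_taylor_two_le hf hf' hlip c (-d)
  simp only [map_neg, _root_.neg_apply, neg_neg, norm_neg, ← sub_eq_add_neg] at hminus
  calc |f (c + d) + f (c - d) - 2 * f c - f'' c d d|
      = |(f (c + d) - f c - f' c d - f'' c d d / 2)
          + (f (c - d) - f c - -f' c d - f'' c d d / 2)| := by ring_nf
    _ ≤ L / 6 * ‖d‖ ^ 3 + L / 6 * ‖d‖ ^ 3 := (abs_add_le _ _).trans (add_le_add hplus hminus)
    _ = L / 3 * ‖d‖ ^ 3 := by ring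

theorem abs_four_point_sub_le (x p q : E) :
    |2 * f (x + p) + 2 * f (x - p) - (1 / 2) * f (x + p + q) - (1 / 2) * f (x + p - q)
        - (1 / 2) * f (x - p - q) - (1 / 2) * f (x - p + q) - 2 * f x - f'' x (p + q) (p - q)|
      ≤ L / 3 * (‖p‖ ^ 3 + ‖q‖ ^ 3 + 3 * ‖p‖ * ‖q‖ ^ 2) := by
  have hsymm : f'' x p q = f'' x q p := second_derivative_symmetric hf (hf' x) p q
  have h0 := abs_add_sub_two_mul_sub_le hf hf' hlip x p
  have hp := abs_add_sub_two_mul_sub_le hf hf' hlip (x + p) q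
  have hm := abs_add_sub_two_mul_sub_le hf hf' hlip (x - p) q
  have kp := abs_sub_apply_apply_le hlip (x + p) x q q
  have km := abs_sub_apply_apply_le hlip (x - p) x q q
  simp only [add_sub_cancel_left, sub_sub_cancel_left, norm_neg] at kp km
  simp only [map_add, map_sub, _root_.add_apply]
  rw [abs_le] at *
  constructor <;> linarith

end Taylor

theorem cube_add_cube_add_three_mul_mul_sq_le {s r Δ : ℝ} (hΔ : 0 ≤ Δ)
    (h : s ^ 2 + r ^ 2 ≤ Δ ^ 2) : s ^ 3 + r ^ 3 + 3 * s * r ^ 2 ≤ 2 * Δ ^ 3 := by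
  have hsq : (s ^ 3 + r ^ 3 + 3 * s * r ^ 2) ^ 2 ≤ (2 * Δ ^ 3) ^ 2 :=
    calc (s ^ 3 + r ^ 3 + 3 * s * r ^ 2) ^ 2 ≤ 4 * (s ^ 2 + r ^ 2) ^ 3 := by
          nlinarith [sq_nonneg (s ^ 3), sq_nonneg (12 * s ^ 2 * r - 2 * s * r ^ 2 - r ^ 3),
            sq_nonneg (46 * s * r ^ 2 - 37 * r ^ 3), sq_nonneg (r ^ 3)]
      _ ≤ 4 * (Δ ^ 2) ^ 3 := by gcongr
      _ = (2 * Δ ^ 3) ^ 2 := by ring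
  exact le_of_sq_le_sq hsq (by positivity)

theorem abs_four_point_sub_le_of_norm_le {E : Type*} [NormedAddCommGroup E]
    [InnerProductSpace ℝ E] {f : E → ℝ} {f' : E → E →L[ℝ] ℝ} {f'' : E → E →L[ℝ] E →L[ℝ] ℝ}
    {L Δ : ℝ} (hf : ∀ x, HasFDerivAt f (f' x) x) (hf' : ∀ x, HasFDerivAt f' (f'' x) x)
    (hlip : ∀ x y, ‖f'' x - f'' y‖ ≤ L * ‖x - y‖) (hL : 0 ≤ L) (x u v : E) (hu : ‖u‖ ≤ Δ)
    (hv : ‖v‖ ≤ Δ) :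
    |2 * f (x + (1 / 2 : ℝ) • (u + v)) + 2 * f (x - (1 / 2 : ℝ) • (u + v))
        - (1 / 2) * f (x + u) - (1 / 2) * f (x + v) - (1 / 2) * f (x - u) - (1 / 2) * f (x - v)
        - 2 * f x - f'' x u v| ≤ 2 * L / 3 * Δ ^ 3 := by
  obtain ⟨p, q, rfl, rfl⟩ : ∃ p q : E, u = p + q ∧ v = p - q :=
    ⟨(1 / 2 : ℝ) • (u + v), (1 / 2 : ℝ) • (u - v), by module, by module⟩
  have hp : (1 / 2 : ℝ) • (p + q + (p - q)) = p := by module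
  rw [hp, ← add_assoc, ← add_sub_assoc, sub_add_eq_sub_sub, ← sub_add]
  have hpq : ‖p‖ ^ 2 + ‖q‖ ^ 2 ≤ Δ ^ 2 := by
    have := parallelogram_law_with_norm ℝ p q
    nlinarith [norm_nonneg (p + q), norm_nonneg (p - q)]
  have hΔ : 0 ≤ Δ := (norm_nonneg _).trans hu
  calc _ ≤ L / 3 * (‖p‖ ^ 3 + ‖q‖ ^ 3 + 3 * ‖p‖ * ‖q‖ ^ 2) :=
        abs_four_point_sub_le hf hf' hlip x p q
    _ ≤ L / 3 * (2 * Δ ^ 3) := by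
      gcongr
      exact cube_add_cube_add_three_mul_mul_sq_le hΔ hpq
    _ = 2 * L / 3 * Δ ^ 3 := by ring

theorem euclNorm_eq_norm {k : ℕ} (v : Fin k → ℝ) : euclNorm v = ‖(WithLp.toLp 2 v : Eu k)‖ := by
  simp [euclNorm, EuclideanSpace.norm_eq]

theorem norm_toEuclideanCLM_le_spNorm {k : ℕ} (A : Matrix (Fin k) (Fin k) ℝ) :
    ‖toEuclideanCLM (𝕜 := ℝ) A‖ ≤ spNorm A := by
  set T := toEuclideanCLM (𝕜 := ℝ) A
  have hbdd : BddAbove (Set.range fun v : {v : Fin k → ℝ // euclNorm v ≤ 1} =>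
      euclNorm (A *ᵥ v.1)) := by
    refine ⟨‖T‖, ?_⟩
    rintro _ ⟨⟨v, hv⟩, rfl⟩
    rw [euclNorm_eq_norm] at hv
    show euclNorm (A *ᵥ v) ≤ ‖T‖
    exact (euclNorm_eq_norm _).trans_le (T.unit_le_opNorm _ hv)
  refine T.opNorm_le_of_unit_norm (Real.iSup_nonneg fun _ => Real.sqrt_nonneg _) fun x hx => ?_
  calc ‖T x‖ = euclNorm (A *ᵥ x.ofLp) := by rw [euclNorm_eq_norm]; rfl
    _ ≤ spNorm A := le_ciSup hbdd ⟨x.ofLp, by rw [euclNorm_eq_norm]; simpa using hx.le⟩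

theorem stmt_5_general {n : ℕ} (f : Eu n → ℝ) (g : Eu n → Eu n)
    (Hf : Eu n → Matrix (Fin n) (Fin n) ℝ) (L : ℝ) (hL : 0 ≤ L)
    (hgrad : ∀ x, HasGradientAt f (g x) x)
    (hhess : ∀ x, HasFDerivAt g (Matrix.toEuclideanCLM (𝕜 := ℝ) (Hf x)) x)
    (hlip : ∀ x y, spNorm (Hf x - Hf y) ≤ L * ‖x - y‖)
    (x0 u v : Eu n) (Δ : ℝ) (hu : ‖u‖ ≤ Δ) (hv : ‖v‖ ≤ Δ) :
    |2 * f (x0 + (1/2 : ℝ) • (u + v)) + 2 * f (x0 - (1/2 : ℝ) • (u + v))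
        - (1/2) * f (x0 + u) - (1/2) * f (x0 + v)
        - (1/2) * f (x0 - u) - (1/2) * f (x0 - v)
        - 2 * f x0 - u ⬝ᵥ (Hf x0).mulVec v|
      ≤ 2 * L / 3 * Δ ^ 3 := by
  set hess : Eu n → Eu n →L[ℝ] Eu n →L[ℝ] ℝ :=
    fun x => (innerSL ℝ).comp (toEuclideanCLM (𝕜 := ℝ) (Hf x))
  have hf (x : Eu n) : HasFDerivAt f (innerSL ℝ (g x)) x :=
    hasGradientAt_iff_hasFDerivAt.mp (hgrad x)
  have hf' (x : Eu n) : HasFDerivAt (fun y => innerSL ℝ (g y)) (hess x) x :=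
    (innerSL ℝ).hasFDerivAt.comp x (hhess x)
  have hess_lip (x y : Eu n) : ‖hess x - hess y‖ ≤ L * ‖x - y‖ :=
    calc ‖hess x - hess y‖ = ‖(innerSL ℝ).comp (toEuclideanCLM (𝕜 := ℝ) (Hf x - Hf y))‖ := by
          rw [map_sub, ContinuousLinearMap.comp_sub]
      _ ≤ ‖toEuclideanCLM (𝕜 := ℝ) (Hf x - Hf y)‖ := by
          refine ((innerSL ℝ).opNorm_comp_le _).trans ?_
          exact mul_le_of_le_one_left (norm_nonneg _) (norm_innerSL_le ℝ)
      _ ≤ L * ‖x - y‖ := (norm_toEuclideanCLM_le_spNorm _).trans (hlip x y)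
  have hess_apply : u ⬝ᵥ (Hf x0) *ᵥ v = hess x0 u v := by
    rw [second_derivative_symmetric hf (hf' x0) u v]
    simp only [hess, ContinuousLinearMap.comp_apply, innerSL_apply_apply]
    rw [real_inner_comm, inner_toEuclideanCLM]
  rw [hess_apply]
  exact abs_four_point_sub_le_of_norm_le hf hf' hess_lip hL x0 u v hu hv

theorem stmt_5 {n : ℕ} (f : Eu n → ℝ) (g : Eu n → Eu n)
    (Hf : Eu n → Matrix (Fin n) (Fin n) ℝ) (L : ℝ) (hL : 0 ≤ L)
    (hgrad : ∀ x, HasGradientAt f (g x) x)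
    (hhess : ∀ x, HasFDerivAt g (Matrix.toEuclideanCLM (𝕜 := ℝ) (Hf x)) x)
    (hlip : ∀ x y, spNorm (Hf x - Hf y) ≤ L * ‖x - y‖)
    (x0 u v : Eu n) (Δ : ℝ) (hΔ : 0 < Δ) (hu : ‖u‖ ≤ Δ) (hv : ‖v‖ ≤ Δ) :
    |2 * f (x0 + (1/2 : ℝ) • (u + v)) + 2 * f (x0 - (1/2 : ℝ) • (u + v))
        - (1/2) * f (x0 + u) - (1/2) * f (x0 + v)
        - (1/2) * f (x0 - u) - (1/2) * f (x0 - v)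
        - 2 * f x0 - u ⬝ᵥ (Hf x0).mulVec v|
      ≤ 2 * L / 3 * Δ ^ 3 :=
  stmt_5_general f g Hf L hL hgrad hhess hlip x0 u v Δ hu hv
end
end

section
/- Suppose f : R^n → R is C^1 with L-Lipschitz gradient, and a quadratic model m(x) = f(x^0) + αᵀ(x−x^0) + (1/2)(x−x^0)ᵀH(x−x^0) interpolates f at the points x^0 + d^i for i = 1,…,m, where the matrix D = [d^1 ⋯ d^m] has full row rank n and ||H|| ≤ κ. Then for all x ∈ B(x^0; Δ_D), |m(x) − f(x^0) − ∇f(x^0)ᵀ(x−x^0)| ≤ ((L+κ)/2 · √n ||(D/Δ_D)†||_1 + κ/2) Δ_D², where Δ_D is the maximum column norm of D and ||·||_1 is the matrix 1-norm (max absolute column sum). -/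
/-! Let `v = α - ∇f(x⁰)`. Interpolation at `x⁰ + dⁱ` together with the descent lemma
`|f(x⁰ + d) - f(x⁰) - ∇f(x⁰)ᵀd| ≤ (L/2)‖d‖²` gives `|vᵀdⁱ| ≤ (L + κ)/2 · Δ²` for every column.
As `D/Δ` has full row rank, its Moore–Penrose inverse is a right inverse, so
`vᵀ = (vᵀ(D/Δ)) (D/Δ)†`; each entry of `v` is therefore at most `(L + κ)/2 · Δ · ‖(D/Δ)†‖₁`
and `‖v‖ ≤ √n` times that. Finally the model error at `x` is
`vᵀ(x - x⁰) + ½ (x - x⁰)ᵀH(x - x⁰)`. -/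

open Matrix
open scoped RealInnerProductSpace

noncomputable section

section Norms

variable {k a b : ℕ}

lemma euclNorm_eq_norm_toLp (v : Fin k → ℝ) : euclNorm v = ‖WithLp.toLp 2 v‖ := by
  simp [euclNorm, EuclideanSpace.norm_eq]

lemma euclNorm_ofLp (y : Eu k) : euclNorm y = ‖y‖ := by
  rw [euclNorm_eq_norm_toLp, WithLp.toLp_ofLp]

lemma euclNorm_nonneg (v : Fin k → ℝ) : 0 ≤ euclNorm v := Real.sqrt_nonneg _

lemma euclNorm_smul (c : ℝ) (v : Fin k → ℝ) : euclNorm (c • v) = |c| * euclNorm v := by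
  rw [euclNorm_eq_norm_toLp, euclNorm_eq_norm_toLp, WithLp.toLp_smul, norm_smul, Real.norm_eq_abs]

lemma abs_dotProduct_le (v w : Fin k → ℝ) : |v ⬝ᵥ w| ≤ euclNorm v * euclNorm w := by
  rw [euclNorm_eq_norm_toLp, euclNorm_eq_norm_toLp, mul_comm]
  simpa [EuclideanSpace.inner_toLp_toLp] using
    abs_real_inner_le_norm (WithLp.toLp 2 w) (WithLp.toLp 2 v)

lemma euclNorm_le_sqrt_card_mul {v : Fin k → ℝ} {c : ℝ} (hv : ∀ i, |v i| ≤ c) :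
    euclNorm v ≤ √k * c := by
  cases k with
  | zero => simp [euclNorm]
  | succ k =>
    have hc : 0 ≤ c := (abs_nonneg _).trans (hv 0)
    calc euclNorm v ≤ √(∑ _i : Fin (k + 1), c ^ 2) :=
          Real.sqrt_le_sqrt <| Finset.sum_le_sum fun i _ =>
            sq_le_sq' (abs_le.1 (hv i)).1 (abs_le.1 (hv i)).2
      _ = √(k + 1 : ℕ) * c := by
          rw [Finset.sum_const, Finset.card_univ, Fintype.card_fin, nsmul_eq_mul,
            Real.sqrt_mul (Nat.cast_nonneg _), Real.sqrt_sq hc]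

lemma spNorm_bddAbove (A : Matrix (Fin a) (Fin b) ℝ) :
    BddAbove (Set.range fun v : {v : Fin b → ℝ // euclNorm v ≤ 1} => euclNorm (A *ᵥ v.1)) := by
  refine ⟨‖(Matrix.toLpLin 2 2 A).toContinuousLinearMap‖, ?_⟩
  rintro _ ⟨⟨v, hv⟩, rfl⟩
  have := (Matrix.toLpLin 2 2 A).toContinuousLinearMap.le_opNorm (WithLp.toLp 2 v)
  simp only [LinearMap.coe_toContinuousLinearMap', Matrix.toLpLin_toLp, Matrix.toLin'_apply,
    ← euclNorm_eq_norm_toLp] at this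
  exact this.trans (mul_le_of_le_one_right (norm_nonneg _) hv)

lemma spNorm_nonneg (A : Matrix (Fin a) (Fin b) ℝ) : 0 ≤ spNorm A :=
  Real.iSup_nonneg fun _ => euclNorm_nonneg _

lemma euclNorm_mulVec_le (A : Matrix (Fin a) (Fin b) ℝ) (u : Fin b → ℝ) :
    euclNorm (A *ᵥ u) ≤ spNorm A * euclNorm u := by
  rcases (euclNorm_nonneg u).eq_or_lt with hu | hu
  · obtain rfl : u = 0 := by simpa [euclNorm_eq_norm_toLp] using hu.symm
    simp [euclNorm]
  · have hunit : euclNorm ((euclNorm u)⁻¹ • u) ≤ 1 := by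
      rw [euclNorm_smul, abs_inv, abs_of_pos hu, inv_mul_cancel₀ hu.ne']
    have := le_ciSup (spNorm_bddAbove A) ⟨_, hunit⟩
    rwa [mulVec_smul, euclNorm_smul, abs_inv, abs_of_pos hu, inv_mul_le_iff₀ hu, mul_comm] at this

lemma abs_dotProduct_mulVec_self_le (H : Matrix (Fin k) (Fin k) ℝ) (u : Fin k → ℝ) :
    |u ⬝ᵥ H *ᵥ u| ≤ spNorm H * euclNorm u ^ 2 :=
  calc |u ⬝ᵥ H *ᵥ u| ≤ euclNorm u * (spNorm H * euclNorm u) :=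
        (abs_dotProduct_le _ _).trans <|
          mul_le_mul_of_nonneg_left (euclNorm_mulVec_le H u) (euclNorm_nonneg u)
    _ = spNorm H * euclNorm u ^ 2 := by ring

lemma sum_abs_le_mat1Norm (A : Matrix (Fin a) (Fin b) ℝ) (j : Fin b) :
    ∑ i, |A i j| ≤ mat1Norm A :=
  le_ciSup (f := fun j => ∑ i, |A i j|) (Set.finite_range _).bddAbove j

end Norms

namespace Matrix

variable {K : Type*} [Field K] {l m n : Type*} [Fintype m] [Fintype n]

lemma mulVecLin_surjective_of_rank_eq {A : Matrix m n K} (hA : A.rank = Fintype.card m) :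
    Function.Surjective A.mulVecLin := by
  rw [← LinearMap.range_eq_top]
  exact Submodule.eq_top_of_finrank_eq <| by
    rw [← Matrix.rank, hA, Module.finrank_fintype_fun_eq_card]

lemma eq_of_mul_eq_mul_of_rank_eq [DecidableEq m] {A : Matrix m n K} (hA : A.rank = Fintype.card m)
    {M N : Matrix l m K} (h : M * A = N * A) : M = N := by
  refine ext_of_mulVec_single fun i => ?_
  obtain ⟨x, hx⟩ := mulVecLin_surjective_of_rank_eq hA (Pi.single i 1)
  rw [← hx, mulVecLin_apply, mulVec_mulVec, mulVec_mulVec, h]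

end Matrix

lemma IsMP.mul_eq_one {a b : ℕ} {A : Matrix (Fin a) (Fin b) ℝ} {A' : Matrix (Fin b) (Fin a) ℝ}
    (h : IsMP A A') (hA : A.rank = a) : A * A' = 1 :=
  Matrix.eq_of_mul_eq_mul_of_rank_eq (by rwa [Fintype.card_fin]) (by rw [h.1, Matrix.one_mul])

lemma abs_le_mul_mat1Norm_of_mul_eq_one {a b : ℕ} {A : Matrix (Fin a) (Fin b) ℝ}
    {B : Matrix (Fin b) (Fin a) ℝ} (hAB : A * B = 1) (v : Fin a → ℝ) {c : ℝ} (hc : 0 ≤ c)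
    (hvA : ∀ j, |(v ᵥ* A) j| ≤ c) (i : Fin a) : |v i| ≤ c * mat1Norm B := by
  have hv : v ᵥ* A ᵥ* B = v := by rw [vecMul_vecMul, hAB, vecMul_one]
  calc |v i| = |∑ j, (v ᵥ* A) j * B j i| := by rw [← congrFun hv i]; rfl
    _ ≤ ∑ j, |(v ᵥ* A) j| * |B j i| := by
        simpa only [abs_mul] using Finset.abs_sum_le_sum_abs (fun j => (v ᵥ* A) j * B j i) _
    _ ≤ ∑ j, c * |B j i| :=
        Finset.sum_le_sum fun j _ => mul_le_mul_of_nonneg_right (hvA j) (abs_nonneg _)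
    _ ≤ c * mat1Norm B := by
        rw [← Finset.mul_sum]; exact mul_le_mul_of_nonneg_left (sum_abs_le_mat1Norm B i) hc

lemma abs_vecMul_inv_smul_le {a b : ℕ} {v : Fin a → ℝ} {D : Matrix (Fin a) (Fin b) ℝ} {Δ c : ℝ}
    (hΔ : 0 < Δ) (hvD : ∀ j, |(v ᵥ* D) j| ≤ c * Δ ^ 2) (j : Fin b) :
    |(v ᵥ* (Δ⁻¹ • D)) j| ≤ c * Δ := by
  rw [vecMul_smul, Pi.smul_apply, smul_eq_mul, abs_mul, abs_inv, abs_of_pos hΔ,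
    inv_mul_le_iff₀ hΔ]
  linarith [hvD j]

lemma abs_sub_sub_inner_le_of_lipschitz_gradient {E : Type*} [NormedAddCommGroup E]
    [InnerProductSpace ℝ E] [CompleteSpace E] {f : E → ℝ} {g : E → E} {L : ℝ}
    (hgrad : ∀ x, HasGradientAt f (g x) x) (hlip : ∀ x y, ‖g x - g y‖ ≤ L * ‖x - y‖)
    (x d : E) : |f (x + d) - f x - ⟪g x, d⟫| ≤ L / 2 * ‖d‖ ^ 2 := by
  set φ : ℝ → ℝ := fun t => f (x + t • d) - f x - t * ⟪g x, d⟫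
  have hφ : ∀ t, HasDerivAt φ ⟪g (x + t • d) - g x, d⟫ t := by
    intro t
    have hline : HasDerivAt (fun t : ℝ => x + t • d) d t := by
      simpa using ((hasDerivAt_id t).smul_const d).const_add x
    have hf := (hgrad (x + t • d)).hasFDerivAt.comp_hasDerivAt t hline
    simp only [InnerProductSpace.toDual_apply_apply] at hf
    rw [inner_sub_left]
    exact (hf.sub_const (f x)).sub (hasDerivAt_mul_const ⟪g x, d⟫)
  have hbound : ∀ t ∈ Set.Ico (0 : ℝ) 1, ‖⟪g (x + t • d) - g x, d⟫‖ ≤ L * ‖d‖ ^ 2 * t := by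
    intro t ht
    calc ‖⟪g (x + t • d) - g x, d⟫‖ ≤ ‖g (x + t • d) - g x‖ * ‖d‖ := norm_inner_le_norm _ _
      _ ≤ L * ‖t • d‖ * ‖d‖ := by
          gcongr; simpa using hlip (x + t • d) x
      _ = L * ‖d‖ ^ 2 * t := by rw [norm_smul, Real.norm_of_nonneg ht.1]; ring
  have hquad : ∀ t, HasDerivAt (fun t : ℝ => L * ‖d‖ ^ 2 * t ^ 2 / 2) (L * ‖d‖ ^ 2 * t) t := by
    intro t
    exact (((hasDerivAt_pow 2 t).const_mul _).div_const 2).congr_deriv (by norm_num; ring)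
  have := image_norm_le_of_norm_deriv_right_le_deriv_boundary
    (fun t _ => (hφ t).continuousAt.continuousWithinAt) (fun t _ => (hφ t).hasDerivWithinAt)
    (by simp [φ]) hquad hbound (Set.right_mem_Icc.2 zero_le_one)
  simp only [φ, one_smul, one_mul, Real.norm_eq_abs, one_pow] at this
  linarith

lemma inner_equiv_symm_eq_dotProduct {k : ℕ} (y : Eu k) (v : Fin k → ℝ) :
    ⟪y, (EuclideanSpace.equiv (Fin k) ℝ).symm v⟫ = y ⬝ᵥ v := by
  simp [EuclideanSpace.inner_eq_star_dotProduct, dotProduct_comm]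

lemma abs_dotProduct_sub_gradient_le_of_interp {n : ℕ} {f : Eu n → ℝ} {g : Eu n → Eu n} {L : ℝ}
    (hgrad : ∀ x, HasGradientAt f (g x) x) (hlip : ∀ x y, ‖g x - g y‖ ≤ L * ‖x - y‖)
    {x0 : Eu n} {α : Fin n → ℝ} {H : Matrix (Fin n) (Fin n) ℝ} {d : Fin n → ℝ}
    (hd : α ⬝ᵥ d + (1/2) * (d ⬝ᵥ H *ᵥ d)
      = f (x0 + (EuclideanSpace.equiv (Fin n) ℝ).symm d) - f x0) :
    |(α - (g x0).ofLp) ⬝ᵥ d| ≤ (L + spNorm H) / 2 * euclNorm d ^ 2 := by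
  set e := (EuclideanSpace.equiv (Fin n) ℝ).symm d
  have hsplit : (α - (g x0).ofLp) ⬝ᵥ d
      = (f (x0 + e) - f x0 - ⟪g x0, e⟫) - (1/2) * (d ⬝ᵥ H *ᵥ d) := by
    rw [inner_equiv_symm_eq_dotProduct, sub_dotProduct]; linarith
  have hdescent := abs_sub_sub_inner_le_of_lipschitz_gradient hgrad hlip x0 e
  have hquad := abs_dotProduct_mulVec_self_le H d
  rw [show ‖e‖ = euclNorm d from (euclNorm_eq_norm_toLp d).symm] at hdescent
  rw [hsplit, abs_le]
  rw [abs_le] at hdescent hquad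
  constructor <;> linarith

lemma abs_dotProduct_add_half_quadForm_le {k : ℕ} {v u : Fin k → ℝ} {H : Matrix (Fin k) (Fin k) ℝ}
    {a r κ : ℝ} (hv : euclNorm v ≤ a) (hu : euclNorm u ≤ r) (hκ : spNorm H ≤ κ) :
    |v ⬝ᵥ u + (1/2) * (u ⬝ᵥ H *ᵥ u)| ≤ a * r + κ / 2 * r ^ 2 := by
  have hlin := (abs_dotProduct_le v u).trans
    (mul_le_mul hv hu (euclNorm_nonneg u) ((euclNorm_nonneg v).trans hv))
  have hquad := (abs_dotProduct_mulVec_self_le H u).trans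
    (mul_le_mul hκ (pow_le_pow_left₀ (euclNorm_nonneg u) hu 2) (by positivity)
      ((spNorm_nonneg H).trans hκ))
  rw [abs_le] at hlin hquad ⊢
  constructor <;> linarith

theorem stmt_8_general {n m : ℕ}
    (f : Eu n → ℝ) (g : Eu n → Eu n) (L : ℝ) (hL : 0 ≤ L)
    (hgrad : ∀ x, HasGradientAt f (g x) x)
    (hlip : ∀ x y, ‖g x - g y‖ ≤ L * ‖x - y‖)
    (x0 : Eu n) (α : Fin n → ℝ) (H : Matrix (Fin n) (Fin n) ℝ)
    (D : Matrix (Fin n) (Fin m) ℝ) (hrank : D.rank = n)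
    (Δ : ℝ) (hΔ : Δ = ⨆ i, euclNorm fun k => D k i)
    (hinterp : ∀ i, α ⬝ᵥ (fun k => D k i)
        + (1/2) * ((fun k => D k i) ⬝ᵥ H.mulVec (fun k => D k i))
        = f (x0 + (EuclideanSpace.equiv (Fin n) ℝ).symm (fun k => D k i)) - f x0)
    (κ : ℝ) (hκ : spNorm H ≤ κ)
    (Dbp : Matrix (Fin m) (Fin n) ℝ) (hDbp : IsMP (Δ⁻¹ • D) Dbp)
    (x : Eu n) (hx : ‖x - x0‖ ≤ Δ) :
    |(f x0 + α ⬝ᵥ (x - x0) + (1/2) * ((x - x0) ⬝ᵥ H.mulVec (x - x0)))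
        - f x0 - g x0 ⬝ᵥ (x - x0)|
      ≤ ((L + κ)/2 * Real.sqrt n * mat1Norm Dbp + κ/2) * Δ ^ 2 := by
  have hκ0 : 0 ≤ κ := (spNorm_nonneg H).trans hκ
  have hcol : ∀ i, euclNorm (fun k => D k i) ≤ Δ := fun i =>
    hΔ ▸ le_ciSup (f := fun i => euclNorm fun k => D k i) (Set.finite_range _).bddAbove i
  obtain hΔ0 | hΔpos := ((norm_nonneg _).trans hx).eq_or_lt
  · obtain rfl : x = x0 := sub_eq_zero.1 (norm_le_zero_iff.1 (hΔ0 ▸ hx))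
    simp [← hΔ0]
  set v := α - (g x0).ofLp
  have hAB : (Δ⁻¹ • D) * Dbp = 1 := hDbp.mul_eq_one <| by
    rw [rank_smul_of_mem_nonZeroDivisors _ (mem_nonZeroDivisors_of_ne_zero (inv_ne_zero hΔpos.ne')),
      hrank]
  have hvA : ∀ j, |(v ᵥ* (Δ⁻¹ • D)) j| ≤ (L + κ) / 2 * Δ :=
    abs_vecMul_inv_smul_le hΔpos fun j =>
      (abs_dotProduct_sub_gradient_le_of_interp hgrad hlip (hinterp j)).trans <| by
        gcongr; exacts [euclNorm_nonneg _, hcol j]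
  have hv : euclNorm v ≤ √n * ((L + κ) / 2 * Δ * mat1Norm Dbp) :=
    euclNorm_le_sqrt_card_mul (abs_le_mul_mat1Norm_of_mul_eq_one hAB v (by positivity) hvA)
  have hsplit : f x0 + α ⬝ᵥ (x - x0) + (1/2) * ((x - x0) ⬝ᵥ H *ᵥ (x - x0)) - f x0
      - g x0 ⬝ᵥ (x - x0) = v ⬝ᵥ (x - x0).ofLp + (1/2) * ((x - x0).ofLp ⬝ᵥ H *ᵥ (x - x0).ofLp) := by
    simp only [v, WithLp.ofLp_sub, sub_dotProduct]; ring
  rw [hsplit]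
  convert abs_dotProduct_add_half_quadForm_le hv ((euclNorm_ofLp _).trans_le hx) hκ using 1
  ring

theorem stmt_8 {n m : ℕ} (hn : 0 < n) (hm : 0 < m)
    (f : Eu n → ℝ) (g : Eu n → Eu n) (L : ℝ) (hL : 0 ≤ L)
    (hgrad : ∀ x, HasGradientAt f (g x) x)
    (hlip : ∀ x y, ‖g x - g y‖ ≤ L * ‖x - y‖)
    (x0 : Eu n) (α : Fin n → ℝ) (H : Matrix (Fin n) (Fin n) ℝ)
    (D : Matrix (Fin n) (Fin m) ℝ) (hrank : D.rank = n)
    (Δ : ℝ) (hΔ : Δ = ⨆ i, euclNorm fun k => D k i)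
    (hinterp : ∀ i, α ⬝ᵥ (fun k => D k i)
        + (1/2) * ((fun k => D k i) ⬝ᵥ H.mulVec (fun k => D k i))
        = f (x0 + (EuclideanSpace.equiv (Fin n) ℝ).symm (fun k => D k i)) - f x0)
    (κ : ℝ) (hκ : spNorm H ≤ κ)
    (Dbp : Matrix (Fin m) (Fin n) ℝ) (hDbp : IsMP (Δ⁻¹ • D) Dbp)
    (x : Eu n) (hx : ‖x - x0‖ ≤ Δ) :
    |(f x0 + α ⬝ᵥ (x - x0) + (1/2) * ((x - x0) ⬝ᵥ H.mulVec (x - x0)))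
        - f x0 - g x0 ⬝ᵥ (x - x0)|
      ≤ ((L + κ)/2 * Real.sqrt n * mat1Norm Dbp + κ/2) * Δ ^ 2 :=
  stmt_8_general f g L hL hgrad hlip x0 α H D hrank Δ hΔ hinterp κ hκ Dbp hDbp x hx
end
end

section
/- Let S ∈ R^{n×p} and T ∈ R^{n×q} with col(S) = col(T), and let B ∈ R^{p×q}. If the problem of minimizing (1/2)||H||_F² over symmetric H subject to SᵀHT = B is feasible, then its unique solution is H* = (Sᵀ)†BT†. -/
open Matrix
open scoped RealInnerProductSpace

noncomputable section

lemma frob_sq {a b : ℕ} (A : Matrix (Fin a) (Fin b) ℝ) :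
    frobNorm A ^ 2 = Matrix.trace (Aᵀ * A) := by
  rw [frobNorm, Real.sq_sqrt (by positivity)]
  simp only [Matrix.trace, Matrix.mul_apply, Matrix.diag, Matrix.transpose_apply, sq]
  rw [Finset.sum_comm]

lemma trace_sq_nonneg {a b : ℕ} (A : Matrix (Fin a) (Fin b) ℝ) :
    0 ≤ Matrix.trace (Aᵀ * A) := by
  rw [← frob_sq]; positivity

lemma trace_sq_eq_zero {a b : ℕ} (A : Matrix (Fin a) (Fin b) ℝ)
    (h : Matrix.trace (Aᵀ * A) = 0) : A = 0 := by
  ext i j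
  have h2 : ∑ i, ∑ j, A i j ^ 2 = 0 := by
    have := frob_sq A
    rw [h, frobNorm, Real.sq_sqrt (by positivity)] at this
    linarith [this]
  have := (Finset.sum_eq_zero_iff_of_nonneg (fun i _ => by positivity)).mp h2 i (Finset.mem_univ i)
  have := (Finset.sum_eq_zero_iff_of_nonneg (fun j _ => by positivity)).mp this j (Finset.mem_univ j)
  simpa using pow_eq_zero_iff (n := 2) (by norm_num) |>.mp this

lemma factor_of_range_le {a b c : ℕ} (S : Matrix (Fin a) (Fin b) ℝ)
    (T : Matrix (Fin a) (Fin c) ℝ)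
    (h : LinearMap.range T.mulVecLin ≤ LinearMap.range S.mulVecLin) :
    ∃ C : Matrix (Fin b) (Fin c) ℝ, S * C = T := by
  choose c hc using fun j =>
    h (LinearMap.mem_range_self T.mulVecLin (Pi.single j 1))
  refine ⟨Matrix.of (fun i j => c j i), ?_⟩
  ext i j
  have := congrFun (hc j) i
  simp only [Matrix.mulVecLin_apply, Matrix.mulVec, dotProduct, Pi.single_apply,
    mul_ite, mul_one, mul_zero, Finset.sum_ite_eq', Finset.mem_univ, if_true] at this
  simpa [Matrix.mul_apply, Matrix.mulVec, dotProduct] using this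

theorem stmt_15 {n p q : ℕ}
    (S : Matrix (Fin n) (Fin p) ℝ) (T : Matrix (Fin n) (Fin q) ℝ)
    (hcol : LinearMap.range S.mulVecLin = LinearMap.range T.mulVecLin)
    (B : Matrix (Fin p) (Fin q) ℝ)
    (hfeas : ∃ H : Matrix (Fin n) (Fin n) ℝ, H.IsSymm ∧ Sᵀ * H * T = B)
    (Sp : Matrix (Fin n) (Fin p) ℝ) (hSp : IsMP Sᵀ Sp)
    (Tp : Matrix (Fin q) (Fin n) ℝ) (hTp : IsMP T Tp) :
    (Sp * B * Tp).IsSymm ∧ Sᵀ * (Sp * B * Tp) * T = B ∧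
    ∀ H : Matrix (Fin n) (Fin n) ℝ, H.IsSymm → Sᵀ * H * T = B →
      (1/2) * frobNorm (Sp * B * Tp) ^ 2 ≤ (1/2) * frobNorm H ^ 2 ∧
      ((1/2) * frobNorm H ^ 2 = (1/2) * frobNorm (Sp * B * Tp) ^ 2 →
        H = Sp * B * Tp) := by
  obtain ⟨H0, hH0sym, hH0⟩ := hfeas
  obtain ⟨hS1, hS2, hS3, hS4⟩ := hSp
  obtain ⟨hT1, hT2, hT3, hT4⟩ := hTp
  obtain ⟨C, hC⟩ := factor_of_range_le S T hcol.ge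
  obtain ⟨D, hD⟩ := factor_of_range_le T S hcol.le
  -- P = Sp * Sᵀ is symmetric, and P = S * Spᵀ
  have hPsymm : (Sp * Sᵀ)ᵀ = Sp * Sᵀ := hS4
  have hPalt : S * Spᵀ = Sp * Sᵀ := by
    calc S * Spᵀ = (Sp * Sᵀ)ᵀ := by rw [Matrix.transpose_mul, Matrix.transpose_transpose]
    _ = Sp * Sᵀ := hS4
  have hPS : Sp * Sᵀ * S = S := by
    rw [← hPalt]
    calc S * Spᵀ * S = (Sᵀ * Sp * Sᵀ)ᵀ := by
          simp [Matrix.transpose_mul, Matrix.mul_assoc]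
    _ = S := by rw [hS1, Matrix.transpose_transpose]
  have hQT : T * Tp * T = T := hT1
  have hPT : Sp * Sᵀ * T = T := by
    rw [← hC, ← Matrix.mul_assoc, hPS]
  have hQS : T * Tp * S = S := by
    rw [← hD, ← Matrix.mul_assoc, hQT]
  have hPQ : Sp * Sᵀ = T * Tp := by
    have h1 : Sp * Sᵀ * (T * Tp) = T * Tp := by
      rw [← Matrix.mul_assoc, hPT]
    have h2 : T * Tp * (Sp * Sᵀ) = Sp * Sᵀ := by
      rw [← hPalt, ← Matrix.mul_assoc, hQS]
    have h3 : T * Tp * (Sp * Sᵀ) = T * Tp := by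
      have := congrArg Matrix.transpose h1
      rwa [Matrix.transpose_mul, hS4, hT3] at this
    rw [← h2, h3]
  -- H* = P * H0 * P
  have hstar : Sp * B * Tp = Sp * Sᵀ * H0 * (T * Tp) := by
    rw [← hH0]
    simp [Matrix.mul_assoc]
  -- symmetry
  have hsym : (Sp * B * Tp).IsSymm := by
    rw [Matrix.IsSymm, hstar]
    calc (Sp * Sᵀ * H0 * (T * Tp))ᵀ
        = (T * Tp)ᵀ * H0ᵀ * (Sp * Sᵀ)ᵀ := by
          simp [Matrix.transpose_mul, Matrix.mul_assoc]
    _ = T * Tp * H0 * (Sp * Sᵀ) := by rw [hT3, hS4, hH0sym, Matrix.mul_assoc]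
    _ = Sp * Sᵀ * H0 * (T * Tp) := by rw [hPQ]
  -- constraint
  have hcons : Sᵀ * (Sp * B * Tp) * T = B := by
    rw [hstar]
    calc Sᵀ * (Sp * Sᵀ * H0 * (T * Tp)) * T
        = (Sᵀ * Sp * Sᵀ) * H0 * (T * Tp * T) := by simp [Matrix.mul_assoc]
    _ = Sᵀ * H0 * T := by rw [hS1, hT1]
    _ = B := hH0
  refine ⟨hsym, hcons, fun H hHsym hH => ?_⟩
  set Hs := Sp * B * Tp with hHs
  clear_value Hs
  set E := H - Hs with hE
  clear_value E
  have hEcons : Sᵀ * E * T = 0 := by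
    rw [hE, Matrix.mul_sub, Matrix.sub_mul, hH, hcons, sub_self]
  -- orthogonality: trace (Hsᵀ * E) = 0
  have horth : Matrix.trace (Hsᵀ * E) = 0 := by
    rw [hsym]
    have hHsE : Hs * E = Sp * Sᵀ * H0 * (T * Tp * E) := by
      rw [hstar, Matrix.mul_assoc]
    rw [hHsE]
    have key : Matrix.trace (Sp * Sᵀ * H0 * (T * Tp * E)) =
        Matrix.trace (H0 * (T * Tp * E) * (Sp * Sᵀ)) := by
      rw [Matrix.mul_assoc (Sp * Sᵀ) H0 (T * Tp * E), Matrix.trace_mul_comm]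
    rw [key]
    have hzero : T * Tp * E * (Sp * Sᵀ) = 0 := by
      rw [← hPQ]
      calc Sp * Sᵀ * E * (Sp * Sᵀ) = Sp * Sᵀ * E * (T * Tp) := by rw [hPQ]
      _ = Sp * (Sᵀ * E * T) * Tp := by simp [Matrix.mul_assoc]
      _ = 0 := by rw [hEcons]; simp
    rw [Matrix.mul_assoc, hzero, Matrix.mul_zero, Matrix.trace_zero]
  -- pythagoras
  have hfH : frobNorm H ^ 2 = frobNorm Hs ^ 2 + frobNorm E ^ 2 := by
    have hHeq : H = Hs + E := by rw [hE]; abel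
    rw [frob_sq, frob_sq, frob_sq, hHeq]
    have hET : Matrix.trace (Eᵀ * Hs) = Matrix.trace (Hsᵀ * E) := by
      rw [← Matrix.trace_transpose (Eᵀ * Hs), Matrix.transpose_mul, Matrix.transpose_transpose]
    rw [Matrix.transpose_add, Matrix.add_mul, Matrix.mul_add, Matrix.mul_add,
      Matrix.trace_add, Matrix.trace_add, Matrix.trace_add, hET, horth]
    ring
  constructor
  · linarith [sq_nonneg (frobNorm E)]
  · intro heq
    have hE0 : Matrix.trace (Eᵀ * E) = 0 := by
      rw [← frob_sq]; linarith
    have h0 := trace_sq_eq_zero E hE0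
    rw [hE] at h0
    exact sub_eq_zero.mp h0
end
end

section
/- Let N ∈ R^{n×n} be orthogonal, and let P_1 ∈ R^{p×p}, P_2 ∈ R^{q×q} be permutation matrices. For f : R^n → R, x^0 ∈ R^n, S ∈ R^{n×p}, T ∈ R^{n×q}, define δ(S,T)_{ij} = f(x^0+s^i+t^j) − f(x^0+s^i) − f(x^0+t^j) + f(x^0), and the GSH ∇²_s f(x^0;S;T) := (Sᵀ)† δ(S,T) T†. Define S̃ := NSP_1, T̃ := NTP_2, and f̃(x) := f(x^0 + Nᵀ(x − x^0)). Then ∇²_s f̃(x^0;S̃;T̃) = N ∇²_s f(x^0;S;T) Nᵀ; in particular, if ∇²_s f(x^0;S;T) is symmetric, so is ∇²_s f̃(x^0;S̃;T̃). -/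
open Matrix
open scoped RealInnerProductSpace

noncomputable section

/-- The interpolation difference matrix δ(S,T) with
δ_{ij} = f(x0+s^i+t^j) − f(x0+s^i) − f(x0+t^j) + f(x0). -/
def gshDelta {n p q : ℕ} (f : (Fin n → ℝ) → ℝ) (x0 : Fin n → ℝ)
    (S : Matrix (Fin n) (Fin p) ℝ) (T : Matrix (Fin n) (Fin q) ℝ) :
    Matrix (Fin p) (Fin q) ℝ :=
  Matrix.of fun i j =>
    f (x0 + (fun k => S k i) + (fun k => T k j)) - f (x0 + fun k => S k i)
      - f (x0 + fun k => T k j) + f x0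

lemma permOrtho {p : ℕ} (σ : Equiv.Perm (Fin p)) (P : Matrix (Fin p) (Fin p) ℝ)
    (hP : ∀ i j, P i j = if i = σ j then 1 else 0) : P * Pᵀ = 1 ∧ Pᵀ * P = 1 := by
  constructor <;> ext i j <;>
    simp only [Matrix.mul_apply, Matrix.transpose_apply, hP, Matrix.one_apply, ite_mul, one_mul,
      zero_mul, mul_ite, mul_one, mul_zero]
  · rw [Finset.sum_eq_single (σ⁻¹ i)]
    · simp [Equiv.eq_symm_apply, eq_comm, Equiv.symm_apply_eq]
    · intro b _ hb
      split_ifs with h1 h2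
      · exact absurd (by rw [h2]; simp) hb
      · rfl
      · rfl
    · simp
  · rw [Finset.sum_eq_single (σ i)]
    · simp
    · intro b _ hb; simp [hb]
    · simp

lemma mpUnique {a b : ℕ} {A : Matrix (Fin a) (Fin b) ℝ} {X Y : Matrix (Fin b) (Fin a) ℝ}
    (hX : IsMP A X) (hY : IsMP A Y) : X = Y := by
  obtain ⟨hX1, hX2, hX3, hX4⟩ := hX
  obtain ⟨hY1, hY2, hY3, hY4⟩ := hY
  have hAt1 : Aᵀ = Aᵀ * (A * Y) := by
    conv_lhs => rw [← hY1]
    rw [Matrix.transpose_mul, hY3]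
  have hAt2 : Aᵀ = (Y * A) * Aᵀ := by
    conv_lhs => rw [← hY1, Matrix.mul_assoc]
    rw [Matrix.transpose_mul, hY4]
  have hAX : A * X = A * Y := by
    calc A * X = (A*X)ᵀ := hX3.symm
    _ = Xᵀ * Aᵀ := by rw [Matrix.transpose_mul]
    _ = Xᵀ * (Aᵀ * (A*Y)) := by rw [← hAt1]
    _ = (Xᵀ * Aᵀ) * (A*Y) := by rw [Matrix.mul_assoc]
    _ = (A*X)ᵀ * (A*Y) := by rw [Matrix.transpose_mul]
    _ = (A*X) * (A*Y) := by rw [hX3]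
    _ = (A*X*A) * Y := by simp only [Matrix.mul_assoc]
    _ = A * Y := by rw [hX1]
  have hXA : X * A = Y * A := by
    calc X * A = (X*A)ᵀ := hX4.symm
    _ = Aᵀ * Xᵀ := by rw [Matrix.transpose_mul]
    _ = ((Y*A) * Aᵀ) * Xᵀ := by rw [← hAt2]
    _ = (Y*A) * (Aᵀ * Xᵀ) := by rw [Matrix.mul_assoc]
    _ = (Y*A) * (X*A)ᵀ := by rw [Matrix.transpose_mul]
    _ = (Y*A) * (X*A) := by rw [hX4]
    _ = Y * (A*X*A) := by simp only [Matrix.mul_assoc]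
    _ = Y * A := by rw [hX1]
  calc X = X*A*X := hX2.symm
  _ = Y*A*X := by rw [hXA]
  _ = Y*(A*X) := by rw [Matrix.mul_assoc]
  _ = Y*(A*Y) := by rw [hAX]
  _ = Y*A*Y := by rw [Matrix.mul_assoc]
  _ = Y := hY2

theorem stmt_16 {n p q : ℕ} (f : (Fin n → ℝ) → ℝ) (x0 : Fin n → ℝ)
    (S : Matrix (Fin n) (Fin p) ℝ) (T : Matrix (Fin n) (Fin q) ℝ)
    (N : Matrix (Fin n) (Fin n) ℝ) (hN : Nᵀ * N = 1)
    (σ1 : Equiv.Perm (Fin p)) (σ2 : Equiv.Perm (Fin q))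
    (P1 : Matrix (Fin p) (Fin p) ℝ) (hP1 : ∀ i j, P1 i j = if i = σ1 j then 1 else 0)
    (P2 : Matrix (Fin q) (Fin q) ℝ) (hP2 : ∀ i j, P2 i j = if i = σ2 j then 1 else 0)
    (Sp : Matrix (Fin n) (Fin p) ℝ) (hSp : IsMP Sᵀ Sp)
    (Tp : Matrix (Fin q) (Fin n) ℝ) (hTp : IsMP T Tp)
    (Sp' : Matrix (Fin n) (Fin p) ℝ) (hSp' : IsMP (N * S * P1)ᵀ Sp')
    (Tp' : Matrix (Fin q) (Fin n) ℝ) (hTp' : IsMP (N * T * P2) Tp')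
    (ftilde : (Fin n → ℝ) → ℝ)
    (hft : ∀ x, ftilde x = f (x0 + Nᵀ.mulVec (x - x0))) :
    Sp' * gshDelta ftilde x0 (N * S * P1) (N * T * P2) * Tp'
        = N * (Sp * gshDelta f x0 S T * Tp) * Nᵀ ∧
    ((Sp * gshDelta f x0 S T * Tp).IsSymm →
      (Sp' * gshDelta ftilde x0 (N * S * P1) (N * T * P2) * Tp').IsSymm) := by
  have hNN : N * Nᵀ = 1 := mul_eq_one_comm.mp hN
  obtain ⟨hP1a, hP1b⟩ := permOrtho σ1 P1 hP1
  obtain ⟨hP2a, hP2b⟩ := permOrtho σ2 P2 hP2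
  -- cancellation helpers
  have cN : ∀ {m : ℕ} (X : Matrix (Fin n) (Fin m) ℝ), Nᵀ * (N * X) = X := by
    intro m X; rw [← Matrix.mul_assoc, hN, Matrix.one_mul]
  have cNT : ∀ {m : ℕ} (X : Matrix (Fin n) (Fin m) ℝ), N * (Nᵀ * X) = X := by
    intro m X; rw [← Matrix.mul_assoc, hNN, Matrix.one_mul]
  have cP1 : ∀ {m : ℕ} (X : Matrix (Fin p) (Fin m) ℝ), P1 * (P1ᵀ * X) = X := by
    intro m X; rw [← Matrix.mul_assoc, hP1a, Matrix.one_mul]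
  have cP1' : ∀ {m : ℕ} (X : Matrix (Fin p) (Fin m) ℝ), P1ᵀ * (P1 * X) = X := by
    intro m X; rw [← Matrix.mul_assoc, hP1b, Matrix.one_mul]
  have cP2 : ∀ {m : ℕ} (X : Matrix (Fin q) (Fin m) ℝ), P2 * (P2ᵀ * X) = X := by
    intro m X; rw [← Matrix.mul_assoc, hP2a, Matrix.one_mul]
  have cP2' : ∀ {m : ℕ} (X : Matrix (Fin q) (Fin m) ℝ), P2ᵀ * (P2 * X) = X := by
    intro m X; rw [← Matrix.mul_assoc, hP2b, Matrix.one_mul]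
  obtain ⟨hS1, hS2, hS3, hS4⟩ := hSp
  obtain ⟨hT1, hT2, hT3, hT4⟩ := hTp
  have hS1X : ∀ {m : ℕ} (X : Matrix (Fin n) (Fin m) ℝ), Sᵀ * (Sp * (Sᵀ * X)) = Sᵀ * X := by
    intro m X; rw [← Matrix.mul_assoc, ← Matrix.mul_assoc, hS1]
  have hS2X : ∀ {m : ℕ} (X : Matrix (Fin p) (Fin m) ℝ), Sp * (Sᵀ * (Sp * X)) = Sp * X := by
    intro m X; rw [← Matrix.mul_assoc, ← Matrix.mul_assoc, hS2]
  have hT1X : ∀ {m : ℕ} (X : Matrix (Fin q) (Fin m) ℝ), T * (Tp * (T * X)) = T * X := by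
    intro m X; rw [← Matrix.mul_assoc, ← Matrix.mul_assoc, hT1]
  have hT2X : ∀ {m : ℕ} (X : Matrix (Fin n) (Fin m) ℝ), Tp * (T * (Tp * X)) = Tp * X := by
    intro m X; rw [← Matrix.mul_assoc, ← Matrix.mul_assoc, hT2]
  -- Sp' = N * Sp * P1
  have hABs : (N*S*P1)ᵀ * (N*Sp*P1) = P1ᵀ * (Sᵀ * Sp) * P1 := by
    simp only [Matrix.transpose_mul, Matrix.mul_assoc, cN]
  have hBAs : (N*Sp*P1) * (N*S*P1)ᵀ = N * (Sp * Sᵀ) * Nᵀ := by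
    simp only [Matrix.transpose_mul, Matrix.mul_assoc, cP1]
  have hSpEq : Sp' = N * Sp * P1 := by
    refine mpUnique hSp' ⟨?_, ?_, ?_, ?_⟩
    · rw [hABs]
      simp only [Matrix.transpose_mul, Matrix.mul_assoc, cN, cNT, cP1, cP1', cP2, cP2', hS1X, hS2X, hT1X, hT2X]
    · rw [Matrix.mul_assoc, hABs]
      simp only [Matrix.mul_assoc, cN, cNT, cP1, cP1', cP2, cP2', hS1X, hS2X, hT1X, hT2X]
    · rw [hABs, Matrix.transpose_mul, Matrix.transpose_mul, Matrix.transpose_transpose, hS3]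
      simp only [Matrix.mul_assoc]
    · rw [hBAs, Matrix.transpose_mul, Matrix.transpose_mul, Matrix.transpose_transpose, hS4]
      simp only [Matrix.mul_assoc]
  -- Tp' = P2ᵀ * Tp * Nᵀ
  have hABt : (N*T*P2) * (P2ᵀ * Tp * Nᵀ) = N * (T * Tp) * Nᵀ := by
    simp only [Matrix.mul_assoc, cP2]
  have hBAt : (P2ᵀ * Tp * Nᵀ) * (N*T*P2) = P2ᵀ * (Tp * T) * P2 := by
    simp only [Matrix.mul_assoc, cN]
  have hTpEq : Tp' = P2ᵀ * Tp * Nᵀ := by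
    refine mpUnique hTp' ⟨?_, ?_, ?_, ?_⟩
    · rw [hABt]
      simp only [Matrix.mul_assoc, cN, cNT, cP1, cP1', cP2, cP2', hS1X, hS2X, hT1X, hT2X]
    · rw [Matrix.mul_assoc, hABt]
      simp only [Matrix.mul_assoc, cN, cNT, cP1, cP1', cP2, cP2', hS1X, hS2X, hT1X, hT2X]
    · rw [hABt, Matrix.transpose_mul, Matrix.transpose_mul, Matrix.transpose_transpose, hT3]
      simp only [Matrix.mul_assoc]
    · rw [hBAt, Matrix.transpose_mul, Matrix.transpose_mul, Matrix.transpose_transpose, hT4]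
      simp only [Matrix.mul_assoc]
  -- the delta transformation
  have hcolS : ∀ i, (fun k => (N*S*P1) k i) = N.mulVec (fun k => S k (σ1 i)) := by
    intro i; funext k
    simp [Matrix.mul_apply, hP1, Matrix.mulVec, dotProduct, mul_ite, mul_one, mul_zero]
  have hcolT : ∀ j, (fun k => (N*T*P2) k j) = N.mulVec (fun k => T k (σ2 j)) := by
    intro j; funext k
    simp [Matrix.mul_apply, hP2, Matrix.mulVec, dotProduct, mul_ite, mul_one, mul_zero]
  have key2 : ∀ (u v : Fin n → ℝ),
      x0 + Nᵀ.mulVec ((x0 + N.mulVec u + N.mulVec v) - x0) = x0 + u + v := by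
    intro u v
    have h1 : (x0 + N.mulVec u + N.mulVec v) - x0 = N.mulVec u + N.mulVec v := by abel
    rw [h1, ← Matrix.mulVec_add, Matrix.mulVec_mulVec, hN, Matrix.one_mulVec, add_assoc]
  have key1 : ∀ (u : Fin n → ℝ),
      x0 + Nᵀ.mulVec ((x0 + N.mulVec u) - x0) = x0 + u := by
    intro u
    have h1 : (x0 + N.mulVec u) - x0 = N.mulVec u := by abel
    rw [h1, Matrix.mulVec_mulVec, hN, Matrix.one_mulVec]
  have key0 : x0 + Nᵀ.mulVec (x0 - x0) = x0 := by
    rw [sub_self, Matrix.mulVec_zero, add_zero]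
  have hdelta : gshDelta ftilde x0 (N*S*P1) (N*T*P2) = P1ᵀ * gshDelta f x0 S T * P2 := by
    ext i j
    have lhs : gshDelta ftilde x0 (N*S*P1) (N*T*P2) i j
        = gshDelta f x0 S T (σ1 i) (σ2 j) := by
      simp only [gshDelta, Matrix.of_apply, hcolS i, hcolT j, hft, key2, key1, key0]
    rw [lhs]
    simp [Matrix.mul_apply, Matrix.transpose_apply, hP1, hP2, ite_mul, mul_ite,
      mul_one, mul_zero, one_mul, zero_mul]
  have main : Sp' * gshDelta ftilde x0 (N * S * P1) (N * T * P2) * Tp'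
      = N * (Sp * gshDelta f x0 S T * Tp) * Nᵀ := by
    rw [hSpEq, hTpEq, hdelta]
    simp only [Matrix.mul_assoc, cP1, cP2]
  refine ⟨main, fun h => ?_⟩
  rw [main]
  show (N * (Sp * gshDelta f x0 S T * Tp) * Nᵀ)ᵀ = _
  rw [Matrix.transpose_mul, Matrix.transpose_mul, Matrix.transpose_transpose, h]
  simp only [Matrix.mul_assoc]
end
end
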